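/- Let C be a connected component with n vertices in a network N, and suppose γ > 0 satisfies γ·C(n,2) < 1. Then every CPM(γ)-optimal clustering of N returns C as a single cluster. -/

import Mathlib

/-! If an optimal clustering `Γ` does not contain `C`, compare it with the clustering obtained by
cutting `C` out of every part of `Γ` and adding it as a part of its own. Since no edge leaves `C`,
a part `p` only loses the edges inside `p ∩ C`, while its number of pairs drops by
`C(|p|, 2) - C(|p \ C|, 2)`. Either `C ⊊ p` for a single part `p`, and the pair count drops by more
than `C(n, 2)` at no cost in edges; or `C` meets two parts, and by connectivity some edge of `C`
is cut, so the new clustering gains at least one edge against a penalty `γ * C(n, 2) < 1`. -/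

open Finset
open scoped Classical

/-- Edges of `E` lying inside the vertex set `c`. -/
noncomputable def inEdges {V : Type*} [DecidableEq V]
    (E : Finset (Sym2 V)) (c : Finset V) : Finset (Sym2 V) :=
  E.filter (fun e => ∀ v ∈ e, v ∈ c)

/-- The CPM(γ) score of a clustering `P` of the graph with edge set `E`. -/
noncomputable def cpm {V : Type*} [Fintype V] [DecidableEq V] (γ : ℝ)
    (E : Finset (Sym2 V)) (P : Finpartition (univ : Finset V)) : ℝ :=
  ∑ c ∈ P.parts, (((inEdges E c).card : ℝ) - γ * (c.card.choose 2))

lemma Nat.add_choose_two (a b : ℕ) : (a + b).choose 2 = a.choose 2 + b.choose 2 + a * b := by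
  induction b with
  | zero => simp
  | succ b ih =>
    rw [← add_assoc, Nat.choose_succ_succ', Nat.choose_succ_succ' b, Nat.choose_one_right,
      Nat.choose_one_right, ih]
    ring

section
variable {V : Type*} [DecidableEq V]

noncomputable def clusterScore (γ : ℝ) (E : Finset (Sym2 V)) (c : Finset V) : ℝ :=
  (inEdges E c).card - γ * c.card.choose 2

lemma mem_inEdges {E : Finset (Sym2 V)} {c : Finset V} {e : Sym2 V} :
    e ∈ inEdges E c ↔ e ∈ E ∧ ∀ v ∈ e, v ∈ c :=
  mem_filter

lemma inEdges_mono (E : Finset (Sym2 V)) {c d : Finset V} (h : c ⊆ d) :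
    inEdges E c ⊆ inEdges E d :=
  fun _ he ↦ mem_inEdges.2 ⟨(mem_inEdges.1 he).1, fun v hv ↦ h ((mem_inEdges.1 he).2 v hv)⟩

@[simp] lemma inEdges_empty (E : Finset (Sym2 V)) : inEdges E ∅ = ∅ :=
  eq_empty_of_forall_notMem fun e he ↦ notMem_empty _ ((mem_inEdges.1 he).2 _ e.out_fst_mem)

@[simp] lemma clusterScore_empty (γ : ℝ) (E : Finset (Sym2 V)) : clusterScore γ E ∅ = 0 := by
  simp [clusterScore]

lemma card_inEdges_eq_inter_add_sdiff {E : Finset (Sym2 V)} {C : Finset V}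
    (hE : ∀ e ∈ E, (∀ v ∈ e, v ∈ C) ∨ ∀ v ∈ e, v ∉ C) (p : Finset V) :
    (inEdges E p).card = (inEdges E (p ∩ C)).card + (inEdges E (p \ C)).card := by
  have hdisj : Disjoint (inEdges E (p ∩ C)) (inEdges E (p \ C)) := by
    refine disjoint_left.2 fun e h₁ h₂ ↦ ?_
    have := (mem_inEdges.1 h₁).2 _ e.out_fst_mem
    exact (mem_sdiff.1 ((mem_inEdges.1 h₂).2 _ e.out_fst_mem)).2 (mem_inter.1 this).2
  rw [← card_union_of_disjoint hdisj]
  congr 1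
  ext e
  simp only [mem_union, mem_inEdges, mem_inter, mem_sdiff]
  constructor
  · rintro ⟨he, hp⟩
    rcases hE e he with h | h
    · exact Or.inl ⟨he, fun v hv ↦ ⟨hp v hv, h v hv⟩⟩
    · exact Or.inr ⟨he, fun v hv ↦ ⟨hp v hv, h v hv⟩⟩
  · rintro (⟨he, hp⟩ | ⟨he, hp⟩)
    · exact ⟨he, fun v hv ↦ (hp v hv).1⟩
    · exact ⟨he, fun v hv ↦ (hp v hv).1⟩

lemma sum_card_inEdges_inter_eq_card_biUnion {s : Finset V} (P : Finpartition s)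
    (E : Finset (Sym2 V)) (c : Finset V) :
    ∑ p ∈ P.parts, (inEdges E (p ∩ c)).card =
      (P.parts.biUnion fun p ↦ inEdges E (p ∩ c)).card := by
  refine (card_biUnion fun p hp q hq hpq ↦ disjoint_left.2 fun e h₁ h₂ ↦ hpq ?_).symm
  exact P.eq_of_mem_parts hp hq (mem_inter.1 ((mem_inEdges.1 h₁).2 _ e.out_fst_mem)).1
    (mem_inter.1 ((mem_inEdges.1 h₂).2 _ e.out_fst_mem)).1

lemma biUnion_inEdges_inter_subset {s : Finset V} (P : Finpartition s)
    (E : Finset (Sym2 V)) (c : Finset V) :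
    P.parts.biUnion (fun p ↦ inEdges E (p ∩ c)) ⊆ inEdges E c :=
  biUnion_subset.2 fun _ _ ↦ inEdges_mono E inter_subset_right

lemma sum_card_inEdges_inter_le {s : Finset V} (P : Finpartition s)
    (E : Finset (Sym2 V)) (c : Finset V) :
    ∑ p ∈ P.parts, (inEdges E (p ∩ c)).card ≤ (inEdges E c).card := by
  rw [sum_card_inEdges_inter_eq_card_biUnion]
  exact card_le_card (biUnion_inEdges_inter_subset P E c)

lemma sum_card_inEdges_inter_lt {s : Finset V} (P : Finpartition s)
    {E : Finset (Sym2 V)} {c : Finset V} {a b : V} (hab : s(a, b) ∈ inEdges E c)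
    (hsep : ∀ p ∈ P.parts, a ∈ p → b ∉ p) :
    ∑ p ∈ P.parts, (inEdges E (p ∩ c)).card < (inEdges E c).card := by
  rw [sum_card_inEdges_inter_eq_card_biUnion]
  refine card_lt_card <| (ssubset_iff_of_subset (biUnion_inEdges_inter_subset P E c)).2
    ⟨s(a, b), hab, fun h ↦ ?_⟩
  obtain ⟨p, hp, he⟩ := mem_biUnion.1 h
  have hp' := (mem_inEdges.1 he).2
  exact hsep p hp (mem_inter.1 (hp' a (Sym2.mem_mk_left a b))).1
    (mem_inter.1 (hp' b (Sym2.mem_mk_right a b))).1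

lemma clusterScore_eq_sdiff_add {E : Finset (Sym2 V)} {C : Finset V}
    (hE : ∀ e ∈ E, (∀ v ∈ e, v ∈ C) ∨ ∀ v ∈ e, v ∉ C) (γ : ℝ) (p : Finset V) :
    clusterScore γ E p = clusterScore γ E (p \ C) +
      ((inEdges E (p ∩ C)).card - γ * ((p.card.choose 2 : ℝ) - (p \ C).card.choose 2)) := by
  rw [clusterScore, clusterScore, card_inEdges_eq_inter_add_sdiff hE p]
  push_cast
  ring

lemma choose_two_card_sdiff_add_lt {C p : Finset V} (hC : C.Nonempty) (hCp : C ⊂ p) :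
    (p \ C).card.choose 2 + C.card.choose 2 < p.card.choose 2 := by
  have hpos : 0 < (p \ C).card * C.card :=
    Nat.mul_pos (card_pos.2 (sdiff_nonempty.2 hCp.not_subset)) (card_pos.2 hC)
  rw [← card_sdiff_add_card_eq_card hCp.subset, Nat.add_choose_two]
  omega

lemma choose_two_card_sdiff_le (p C : Finset V) : (p \ C).card.choose 2 ≤ p.card.choose 2 :=
  Nat.choose_le_choose 2 (card_le_card sdiff_subset)

end

section
variable {V : Type*} [Fintype V] [DecidableEq V]

lemma cpm_eq_sum_clusterScore (γ : ℝ) (E : Finset (Sym2 V)) (P : Finpartition (univ : Finset V)) :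
    cpm γ E P = ∑ c ∈ P.parts, clusterScore γ E c :=
  rfl

noncomputable def Finpartition.isolate (P : Finpartition (univ : Finset V)) {C : Finset V}
    (hC : C.Nonempty) : Finpartition (univ : Finset V) :=
  (P.avoid C).extend hC.ne_empty sdiff_disjoint (sdiff_union_of_subset (subset_univ C))

lemma cpm_isolate (γ : ℝ) (E : Finset (Sym2 V)) (P : Finpartition (univ : Finset V))
    {C : Finset V} (hC : C.Nonempty) :
    cpm γ E (P.isolate hC) = clusterScore γ E C + ∑ p ∈ P.parts, clusterScore γ E (p \ C) := by
  have hCnotin : C ∉ (P.avoid C).parts := by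
    rw [Finpartition.mem_avoid]
    rintro ⟨d, -, -, hdC⟩
    obtain ⟨x, hx⟩ := hC
    exact (mem_sdiff.1 (show x ∈ d \ C by rw [hdC]; exact hx)).2 hx
  have hdisj : (P.parts : Set (Finset V)).PairwiseDisjoint (· \ C) := fun p hp q hq hpq ↦
    (P.disjoint hp hq hpq).mono sdiff_le sdiff_le
  rw [cpm_eq_sum_clusterScore, Finpartition.isolate, Finpartition.extend_parts,
    sum_insert hCnotin]
  show _ + ∑ c ∈ (P.parts.image (· \ C)).erase ⊥, _ = _
  rw [sum_erase (a := ⊥) _ (clusterScore_empty γ E),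
    sum_image_of_disjoint (clusterScore_empty γ E) hdisj]

section
variable {E : Finset (Sym2 V)} {C : Finset V} {γ : ℝ} {P : Finpartition (univ : Finset V)}

lemma cpm_lt_cpm_isolate_of_sum_lt (hE : ∀ e ∈ E, (∀ v ∈ e, v ∈ C) ∨ ∀ v ∈ e, v ∉ C)
    (hC : C.Nonempty)
    (h : ∑ p ∈ P.parts, ((inEdges E (p ∩ C)).card -
      γ * ((p.card.choose 2 : ℝ) - (p \ C).card.choose 2)) < clusterScore γ E C) :
    cpm γ E P < cpm γ E (P.isolate hC) := by
  rw [cpm_isolate, cpm_eq_sum_clusterScore, sum_congr rfl fun p _ ↦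
    clusterScore_eq_sdiff_add hE γ p, sum_add_distrib]
  linarith

lemma cpm_lt_cpm_isolate_of_ssubset (hE : ∀ e ∈ E, (∀ v ∈ e, v ∈ C) ∨ ∀ v ∈ e, v ∉ C)
    (hγ : 0 < γ) (hC : C.Nonempty) {p : Finset V} (hp : p ∈ P.parts) (hCp : C ⊂ p) :
    cpm γ E P < cpm γ E (P.isolate hC) := by
  refine cpm_lt_cpm_isolate_of_sum_lt hE hC ?_
  have hedges : ∑ q ∈ P.parts, ((inEdges E (q ∩ C)).card : ℝ) ≤ (inEdges E C).card := by
    exact_mod_cast sum_card_inEdges_inter_le P E C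
  have hsingle : (p.card.choose 2 : ℝ) - (p \ C).card.choose 2 ≤
      ∑ q ∈ P.parts, ((q.card.choose 2 : ℝ) - (q \ C).card.choose 2) :=
    single_le_sum (f := fun q ↦ (q.card.choose 2 : ℝ) - (q \ C).card.choose 2)
      (fun q _ ↦ sub_nonneg.2 (by exact_mod_cast choose_two_card_sdiff_le q C)) hp
  have hpairs : (C.card.choose 2 : ℝ) < p.card.choose 2 - (p \ C).card.choose 2 := by
    rw [lt_sub_iff_add_lt']
    exact_mod_cast choose_two_card_sdiff_add_lt hC hCp
  have := mul_le_mul_of_nonneg_left hsingle hγ.le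
  have := mul_lt_mul_of_pos_left hpairs hγ
  rw [sum_sub_distrib, ← mul_sum, clusterScore]
  linarith

lemma cpm_lt_cpm_isolate_of_cut (hE : ∀ e ∈ E, (∀ v ∈ e, v ∈ C) ∨ ∀ v ∈ e, v ∉ C)
    (hγ : 0 ≤ γ) (hγsmall : γ * (C.card.choose 2 : ℝ) < 1) (hC : C.Nonempty) {a b : V}
    (hab : s(a, b) ∈ inEdges E C) (hsep : ∀ p ∈ P.parts, a ∈ p → b ∉ p) :
    cpm γ E P < cpm γ E (P.isolate hC) := by
  refine cpm_lt_cpm_isolate_of_sum_lt hE hC ?_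
  have hedges : ∑ q ∈ P.parts, ((inEdges E (q ∩ C)).card : ℝ) + 1 ≤ (inEdges E C).card := by
    exact_mod_cast sum_card_inEdges_inter_lt P hab hsep
  have hpairs : 0 ≤ ∑ q ∈ P.parts, ((q.card.choose 2 : ℝ) - (q \ C).card.choose 2) :=
    sum_nonneg fun q _ ↦ sub_nonneg.2 (by exact_mod_cast choose_two_card_sdiff_le q C)
  have := mul_nonneg hγ hpairs
  rw [sum_sub_distrib, ← mul_sum, clusterScore]
  linarith

end

end

namespace SimpleGraph
variable {V : Type*} {G : SimpleGraph V}

lemma Reachable.exists_adj_mem_notMem {S : Set V} {u v : V} (h : G.Reachable u v) (hu : u ∈ S)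
    (hv : v ∉ S) : ∃ a b, G.Adj a b ∧ a ∈ S ∧ b ∉ S := by
  obtain ⟨w⟩ := h
  obtain ⟨d, -, hd₁, hd₂⟩ := w.exists_boundary_dart S hu hv
  exact ⟨_, _, d.adj, hd₁, hd₂⟩

variable [Fintype V] [DecidableEq V] [DecidableRel G.Adj] {C : Finset V}

lemma mem_or_notMem_of_mem_edgeFinset (hclosed : ∀ u ∈ C, ∀ v, G.Adj u v → v ∈ C) :
    ∀ e ∈ G.edgeFinset, (∀ v ∈ e, v ∈ C) ∨ ∀ v ∈ e, v ∉ C := by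
  refine Sym2.ind fun x y he ↦ ?_
  have hxy : G.Adj x y := mem_edgeFinset.1 he
  by_cases hx : x ∈ C
  · exact Or.inl fun v hv ↦ (Sym2.mem_iff.1 hv).elim (· ▸ hx) (· ▸ hclosed x hx y hxy)
  · exact Or.inr fun v hv ↦ (Sym2.mem_iff.1 hv).elim (· ▸ hx)
      (· ▸ fun hy ↦ hx (hclosed y hy x hxy.symm))

lemma exists_inEdges_separated (hclosed : ∀ u ∈ C, ∀ v, G.Adj u v → v ∈ C)
    (hconn : ∀ u ∈ C, ∀ v ∈ C, G.Reachable u v) (hC : C.Nonempty)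
    (P : Finpartition (univ : Finset V)) (hsplit : ∀ p ∈ P.parts, ¬C ⊆ p) :
    ∃ a b, s(a, b) ∈ inEdges G.edgeFinset C ∧ ∀ p ∈ P.parts, a ∈ p → b ∉ p := by
  obtain ⟨u, hu⟩ := hC
  have hpu := P.part_mem.2 (mem_univ u)
  obtain ⟨v, hv, hvu⟩ := not_subset.1 (hsplit _ hpu)
  obtain ⟨a, b, hab, ⟨ha, haC⟩, hb⟩ := (hconn u hu v hv).exists_adj_mem_notMem
    (S := {x | x ∈ P.part u ∧ x ∈ C}) ⟨P.mem_part (mem_univ u), hu⟩ fun h ↦ hvu h.1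
  have hbC := hclosed a haC b hab
  refine ⟨a, b, mem_inEdges.2 ⟨mem_edgeFinset.2 hab, fun w hw ↦ ?_⟩, fun p hp hap ↦ ?_⟩
  · exact (Sym2.mem_iff.1 hw).elim (· ▸ haC) (· ▸ hbC)
  · rw [P.eq_of_mem_parts hp hpu hap ha]
    exact fun h ↦ hb ⟨h, hbC⟩

end SimpleGraph

/-- if `C` is a connected component with `n` vertices of a network `N` and
`γ * C(n,2) < 1` (with `γ > 0`), then every CPM(γ)-optimal clustering of `N` returns `C`
as a single cluster. -/
theorem stmt_7 {V : Type*} [Fintype V] [DecidableEq V]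
    (G : SimpleGraph V) [DecidableRel G.Adj]
    (γ : ℝ) (hγ : 0 < γ)
    (C : Finset V) (hne : C.Nonempty)
    (hclosed : ∀ u ∈ C, ∀ v : V, G.Adj u v → v ∈ C)
    (hconn : ∀ u ∈ C, ∀ v ∈ C, G.Reachable u v)
    (hγsmall : γ * (C.card.choose 2 : ℝ) < 1)
    (Γ : Finpartition (univ : Finset V))
    (hopt : ∀ P : Finpartition (univ : Finset V),
      cpm γ G.edgeFinset P ≤ cpm γ G.edgeFinset Γ) :
    C ∈ Γ.parts := by
  by_contra hCΓ
  have hE := G.mem_or_notMem_of_mem_edgeFinset hclosed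
  refine (hopt (Γ.isolate hne)).not_gt ?_
  by_cases hsub : ∃ p ∈ Γ.parts, C ⊆ p
  · obtain ⟨p, hp, hCp⟩ := hsub
    exact cpm_lt_cpm_isolate_of_ssubset hE hγ hne hp
      (hCp.ssubset_of_ne fun h ↦ hCΓ (h ▸ hp))
  · push Not at hsub
    obtain ⟨a, b, hab, hsep⟩ := G.exists_inEdges_separated hclosed hconn hne Γ hsub
    exact cpm_lt_cpm_isolate_of_cut hE hγ.le hγsmall hne hab hsep
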